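/- arXiv:2504.13105 — 2 statements merged into one kernel-verified Lean document; each statement's English description precedes it below -/
import Mathlib

section
/- For every links system L with links indexed as described, every i ∈ {1,…,n−1}, and every set L' ⊆ δ_L(N_i) ∖ {ℓ_k} of exactly k/2 links, the vector χ^{L̂} − χ^{L'}, where L̂ = {ℓ_r : r ∈ φ(L')}, lies in the integer span of the vectors χ^{δ_L(N_1)}, …, χ^{δ_L(N_{n−1})} in ℝ^L. -/
open Finset

namespace CoverSmallCuts

/-- `nn k` is the number `n = 2 + k(k-1)/2` of nodes. -/
def nn (k : ℕ) : ℕ := 2 + k * (k - 1) / 2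

/-- `mm k` is the number `m = k(k-1)/2 + k` of links. -/
def mm (k : ℕ) : ℕ := k * (k - 1) / 2 + k

/-- The nested set `N_i = {1, …, i}`. -/
def Nset (i : ℕ) : Finset ℕ := Finset.Icc 1 i

/-- The Q-set `Q_j = {2+(j-1)k/2, …, 1+j·k/2}`. -/
def Qset (k j : ℕ) : Finset ℕ := Finset.Icc (2 + (j - 1) * (k / 2)) (1 + j * (k / 2))

/-- Capacity of the path edge `{i, i+1}` of the capacitated graph `G`. -/
def pathCap (k i : ℕ) : ℕ :=
  if i = 1 ∨ i = nn k - 1 then 2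
  else if ∃ j ∈ Finset.Icc 1 (k - 1), i ∈ Qset k j ∧ i + 1 ∈ Qset k j then 3
  else 1

/-- Capacity of the cut `δ(S)` in the capacitated graph `G`: the sum of the capacities
of the edges of `G` with exactly one endpoint in `S`. -/
def cutCap (k : ℕ) (S : Finset ℕ) : ℕ :=
  (∑ i ∈ Finset.Icc 1 (nn k - 1),
      if (i ∈ S) ↔ ((i + 1) ∈ S) then 0 else pathCap k i)
  + (∑ j ∈ Finset.Icc 1 (k - 1),
      if ((1 + (j - 1) * (k / 2)) ∈ S) ↔ ((2 + j * (k / 2)) ∈ S) then 0 else 1)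

/-- A links system: the `s,t`-paths `P_1, …, P_{k-1}` are recorded by the function
`node`, where `node i t` is the `t`-th node of the path `P_i` (for `1 ≤ i ≤ k-1` and
`0 ≤ t ≤ k/2 + 1`); the class `P_k` consists of the single link `{1, n}`. -/
structure LinksSystem (k : ℕ) where
  node : ℕ → ℕ → ℕ
  /-- each path `P_i` starts at `s = 1` -/
  node_first : ∀ i ∈ Finset.Icc 1 (k - 1), node i 0 = 1
  /-- each path `P_i` ends at `t = n` -/
  node_last : ∀ i ∈ Finset.Icc 1 (k - 1), node i (k / 2 + 1) = nn k
  /-- node indices strictly increase along each path -/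
  node_mono : ∀ i ∈ Finset.Icc 1 (k - 1), ∀ t ≤ k / 2, node i t < node i (t + 1)
  /-- every node in `{2, …, n-1}` is an internal node of exactly one of `P_1, …, P_{k-1}` -/
  cover : ∀ v ∈ Finset.Icc 2 (nn k - 1),
      ∃! i, i ∈ Finset.Icc 1 (k - 1) ∧ ∃ t ∈ Finset.Icc 1 (k / 2), node i t = v
  /-- `P_i` has an internal node in `Q_j` iff
  `(i ≤ j ≤ min(i+k/2-1, k-1))` or `(j < i and j ≤ i-k/2)` -/
  meetsQ : ∀ i ∈ Finset.Icc 1 (k - 1), ∀ j ∈ Finset.Icc 1 (k - 1),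
      ((∃ t ∈ Finset.Icc 1 (k / 2), node i t ∈ Qset k j) ↔
        ((i ≤ j ∧ j ≤ min (i + k / 2 - 1) (k - 1)) ∨ (j < i ∧ j ≤ i - k / 2)))

/-- The class `P_i` of links: the edge set of the path `P_i` for `i < k`,
and `{{1, n}}` for `i = k`. -/
def LinksSystem.P {k : ℕ} (LS : LinksSystem k) (i : ℕ) : Finset (Sym2 ℕ) :=
  if i = k then {s(1, nn k)}
  else (Finset.Icc 0 (k / 2)).image fun t => s(LS.node i t, LS.node i (t + 1))

/-- The set `L` of all links. -/
def LinksSystem.links {k : ℕ} (LS : LinksSystem k) : Finset (Sym2 ℕ) :=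
  (Finset.Icc 1 k).biUnion LS.P

open scoped Classical in
/-- `deltaL F S` is `δ_F(S)`: the set of links of `F` with exactly one endpoint in `S`. -/
noncomputable def deltaL (F : Finset (Sym2 ℕ)) (S : Finset ℕ) : Finset (Sym2 ℕ) :=
  F.filter fun e => ∃ a b, e = s(a, b) ∧ a ∈ S ∧ b ∉ S

/-- The 0-1 indicator vector `χ^F` of a set `F` of links. -/
noncomputable def chi (F : Finset (Sym2 ℕ)) : Sym2 ℕ → ℝ :=
  fun e => if e ∈ F then 1 else 0


section AuxLemmas

variable {k : ℕ}

lemma node_strictmono (hk : 4 ≤ k) (LS : LinksSystem k) {r : ℕ}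
    (hr : r ∈ Finset.Icc 1 (k - 1)) {t t' : ℕ} (h : t < t') (h2 : t' ≤ k / 2 + 1) :
    LS.node r t < LS.node r t' := by
  induction t' with
  | zero => omega
  | succ s ih =>
    have hs : s ≤ k / 2 := by omega
    have hstep := LS.node_mono r hr s hs
    rcases Nat.lt_or_ge t s with hts | hts
    · exact lt_trans (ih hts (by omega)) hstep
    · have : t = s := by omega
      subst this; exact hstep

lemma node_mono_le (hk : 4 ≤ k) (LS : LinksSystem k) {r : ℕ}
    (hr : r ∈ Finset.Icc 1 (k - 1)) {t t' : ℕ} (h : t ≤ t') (h2 : t' ≤ k / 2 + 1) :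
    LS.node r t ≤ LS.node r t' := by
  rcases Nat.lt_or_ge t t' with h' | h'
  · exact le_of_lt (node_strictmono hk LS hr h' h2)
  · have : t = t' := by omega
    subst this; exact le_rfl

lemma nn_ge (hk : 4 ≤ k) : 8 ≤ nn k := by
  have h12 : 12 ≤ k * (k - 1) := by nlinarith [Nat.sub_add_cancel (by omega : 1 ≤ k)]
  have : 6 ≤ k * (k - 1) / 2 := by omega
  unfold nn; omega

lemma node_bounds (hk : 4 ≤ k) (LS : LinksSystem k) {r : ℕ}
    (hr : r ∈ Finset.Icc 1 (k - 1)) {t : ℕ} (ht1 : 1 ≤ t) (ht2 : t ≤ k / 2) :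
    2 ≤ LS.node r t ∧ LS.node r t ≤ nn k - 1 := by
  have h1 := node_strictmono hk LS hr (show 0 < t by omega) (by omega)
  have h2 := node_strictmono hk LS hr (show t < k / 2 + 1 by omega) le_rfl
  rw [LS.node_first r hr] at h1
  rw [LS.node_last r hr] at h2
  have := nn_ge hk
  omega

lemma internal_unique (hk : 4 ≤ k) (LS : LinksSystem k) {r r' t t' : ℕ}
    (hr : r ∈ Finset.Icc 1 (k - 1)) (hr' : r' ∈ Finset.Icc 1 (k - 1))
    (ht1 : 1 ≤ t) (ht2 : t ≤ k / 2) (ht1' : 1 ≤ t') (ht2' : t' ≤ k / 2)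
    (heq : LS.node r t = LS.node r' t') : r = r' ∧ t = t' := by
  have hb := node_bounds hk LS hr ht1 ht2
  obtain ⟨w, _, huniq⟩ := LS.cover (LS.node r t) (Finset.mem_Icc.mpr ⟨hb.1, hb.2⟩)
  have e1 : r = w := huniq r ⟨hr, t, Finset.mem_Icc.mpr ⟨ht1, ht2⟩, rfl⟩
  have e2 : r' = w := huniq r' ⟨hr', t', Finset.mem_Icc.mpr ⟨ht1', ht2'⟩, heq.symm⟩
  have hrr' : r = r' := e1.trans e2.symm
  subst hrr'
  refine ⟨rfl, ?_⟩
  rcases lt_trichotomy t t' with h | h | h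
  · have := node_strictmono hk LS hr h (by omega); omega
  · exact h
  · have := node_strictmono hk LS hr h (by omega); omega

lemma snn_not_mem (hk : 4 ≤ k) (LS : LinksSystem k) {r : ℕ}
    (hr : r ∈ Finset.Icc 1 (k - 1)) : s(1, nn k) ∉ LS.P r := by
  intro hmem
  have hrk : r ≠ k := by have := Finset.mem_Icc.mp hr; omega
  rw [LinksSystem.P, if_neg hrk, Finset.mem_image] at hmem
  obtain ⟨t, ht, heq⟩ := hmem
  rw [Finset.mem_Icc] at ht
  have hh : 2 ≤ k / 2 := by omega
  rw [Sym2.eq_iff] at heq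
  have hlast := LS.node_last r hr
  have hfirst := LS.node_first r hr
  rcases heq with ⟨h1, h2⟩ | ⟨h1, h2⟩
  · have ht0 : t = 0 := by
      by_contra h
      have := node_strictmono hk LS hr (show 0 < t by omega) (by omega)
      rw [hfirst] at this; omega
    subst ht0
    rw [Nat.zero_add] at h2
    have := node_strictmono hk LS hr (show 1 < k / 2 + 1 by omega) le_rfl
    rw [hlast] at this; omega
  · have := node_strictmono hk LS hr (show t < k / 2 + 1 by omega) le_rfl
    rw [hlast] at this; omega

lemma classP_unique (hk : 4 ≤ k) (LS : LinksSystem k) {e : Sym2 ℕ} {r r' : ℕ}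
    (hr : r ∈ Finset.Icc 1 k) (hr' : r' ∈ Finset.Icc 1 k)
    (he : e ∈ LS.P r) (he' : e ∈ LS.P r') : r = r' := by
  by_cases hrk : r = k <;> by_cases hrk' : r' = k
  · omega
  · exfalso
    subst hrk
    rw [LinksSystem.P, if_pos rfl, Finset.mem_singleton] at he
    subst he
    exact snn_not_mem hk LS (Finset.mem_Icc.mpr ⟨(Finset.mem_Icc.mp hr').1, by
      have := Finset.mem_Icc.mp hr'; omega⟩) he'
  · exfalso
    subst hrk'
    rw [LinksSystem.P, if_pos rfl, Finset.mem_singleton] at he'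
    subst he'
    exact snn_not_mem hk LS (Finset.mem_Icc.mpr ⟨(Finset.mem_Icc.mp hr).1, by
      have := Finset.mem_Icc.mp hr; omega⟩) he
  · have hr2 : r ∈ Finset.Icc 1 (k - 1) := by
      have := Finset.mem_Icc.mp hr; rw [Finset.mem_Icc]; omega
    have hr2' : r' ∈ Finset.Icc 1 (k - 1) := by
      have := Finset.mem_Icc.mp hr'; rw [Finset.mem_Icc]; omega
    rw [LinksSystem.P, if_neg hrk, Finset.mem_image] at he
    rw [LinksSystem.P, if_neg hrk', Finset.mem_image] at he'
    obtain ⟨t, ht, heq⟩ := he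
    obtain ⟨t', ht', heq'⟩ := he'
    rw [Finset.mem_Icc] at ht ht'
    have hcomb : s(LS.node r t, LS.node r (t + 1)) = s(LS.node r' t', LS.node r' (t' + 1)) :=
      heq.trans heq'.symm
    rw [Sym2.eq_iff] at hcomb
    have hfirst := LS.node_first r hr2
    have hfirst' := LS.node_first r' hr2'
    rcases hcomb with ⟨h1, h2⟩ | ⟨h1, h2⟩
    · by_cases ht0 : t = 0
      · subst ht0
        have ht0' : t' = 0 := by
          by_contra h
          have := node_strictmono hk LS hr2' (show 0 < t' by omega) (by omega)
          rw [hfirst'] at this; omega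
        subst ht0'
        exact (internal_unique hk LS hr2 hr2' (by omega) (by omega) (by omega) (by omega)
          h2).1
      · have ht0' : t' ≠ 0 := by
          intro h
          subst h
          rw [hfirst'] at h1
          have := node_strictmono hk LS hr2 (show 0 < t by omega) (by omega)
          rw [hfirst] at this; omega
        exact (internal_unique hk LS hr2 hr2' (by omega) (by omega) (by omega) (by omega)
          h1).1
    · exfalso
      have hA := node_strictmono hk LS hr2 (show t < t + 1 by omega) (by omega)
      have hB := node_strictmono hk LS hr2' (show t' < t' + 1 by omega) (by omega)
      omega

lemma mem_deltaL_iff (F : Finset (Sym2 ℕ)) {a b j : ℕ} (ha : 1 ≤ a) (hab : a < b) :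
    s(a, b) ∈ deltaL F (Nset j) ↔ s(a, b) ∈ F ∧ a ≤ j ∧ j < b := by
  classical
  unfold deltaL; rw [Finset.mem_filter]; simp only [Nset, Finset.mem_Icc]
  constructor
  · rintro ⟨hF, a', b', he, h12, h3⟩
    refine ⟨hF, ?_⟩
    rw [Sym2.eq_iff] at he
    rcases he with ⟨rfl, rfl⟩ | ⟨rfl, rfl⟩ <;> omega
  · rintro ⟨hF, h1, h2⟩
    exact ⟨hF, a, b, rfl, ⟨ha, h1⟩, by omega⟩

end AuxLemmas

/-- for every links system with links indexed as described, every
`i ∈ {1, …, n-1}`, and every set `L' ⊆ δ_L(N_i) \ {ℓ_k}` of exactly `k/2` links,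
the vector `χ^{L̂} - χ^{L'}`, where `L̂ = {ℓ_r : r ∈ φ(L')}`, lies in the integer span
of the vectors `χ^{δ_L(N_1)}, …, χ^{δ_L(N_{n-1})}`. -/
theorem statement11 (k : ℕ) (hk : 4 ≤ k) (hke : Even k) (LS : LinksSystem k)
    (ℓ : ℕ → Sym2 ℕ)
    (hℓ1 : ∀ i ∈ Finset.Icc 1 k, ℓ i ∈ LS.P i ∧ ∃ b, ℓ i = s(1, b))
    (hℓ2 : ∀ v ∈ Finset.Icc 2 (nn k - 1),
        ℓ (k + v - 1) ∈ LS.links ∧ ∃ b, v < b ∧ ℓ (k + v - 1) = s(v, b))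
    (φ : Sym2 ℕ → ℕ)
    (hφ : ∀ i ∈ Finset.Icc 1 k, ∀ e ∈ LS.P i, φ e = i)
    (i : ℕ) (hi : i ∈ Finset.Icc 1 (nn k - 1))
    (L' : Finset (Sym2 ℕ)) (hL'sub : L' ⊆ deltaL LS.links (Nset i) \ {ℓ k})
    (hL'card : L'.card = k / 2) :
    chi ((L'.image φ).image ℓ) - chi L' ∈
      Submodule.span ℤ
        ((fun r => chi (deltaL LS.links (Nset r))) '' (Set.Icc 1 (nn k - 1))) := by
  classical
  obtain ⟨hi1, hi2⟩ := Finset.mem_Icc.mp hi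
  have hn8 : 8 ≤ nn k := nn_ge hk
  have hh2 : 2 ≤ k / 2 := by omega
  set R : Finset ℕ := L'.image φ with hR
  set c : ℕ → ℤ := fun v =>
    if ∃ rr ∈ R, ∃ t ∈ Finset.Icc 1 (k / 2), LS.node rr t = v then 1 else 0 with hc
  have hkIcc : k ∈ Finset.Icc 1 k := Finset.mem_Icc.mpr ⟨by omega, le_rfl⟩
  have hlk : ℓ k = s(1, nn k) := by
    have h := (hℓ1 k hkIcc).1
    rw [LinksSystem.P, if_pos rfl, Finset.mem_singleton] at h
    exact h
  have hL'mem : ∀ e' ∈ L', ∃ j ∈ Finset.Icc 1 (k - 1), e' ∈ LS.P j ∧ φ e' = j := by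
    intro e' he'
    have hsd := hL'sub he'
    rw [Finset.mem_sdiff, Finset.mem_singleton] at hsd
    obtain ⟨hdel, hne⟩ := hsd
    have hlinks : e' ∈ LS.links := (Finset.mem_filter.mp hdel).1
    rw [LinksSystem.links, Finset.mem_biUnion] at hlinks
    obtain ⟨j, hj, hPj⟩ := hlinks
    have hjk : j ≠ k := by
      intro h; subst h
      rw [LinksSystem.P, if_pos rfl, Finset.mem_singleton] at hPj
      exact hne (hPj.trans hlk.symm)
    have hj' := Finset.mem_Icc.mp hj
    exact ⟨j, Finset.mem_Icc.mpr ⟨hj'.1, by omega⟩, hPj, hφ j hj e' hPj⟩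
  have hRsub : ∀ j ∈ R, j ∈ Finset.Icc 1 (k - 1) ∧ ∃ e' ∈ L', e' ∈ LS.P j := by
    intro j hj
    rw [hR, Finset.mem_image] at hj
    obtain ⟨e', he', rfl⟩ := hj
    obtain ⟨j', hj', hP, hphi⟩ := hL'mem e' he'
    rw [hphi]
    exact ⟨hj', e', he', hP⟩
  have key : chi ((L'.image φ).image ℓ) - chi L'
      = ∑ v ∈ Finset.Icc 2 i, c v •
          (chi (deltaL LS.links (Nset (v - 1))) - chi (deltaL LS.links (Nset v))) := by
    funext e
    have expand :
        (∑ v ∈ Finset.Icc 2 i, c v •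
            (chi (deltaL LS.links (Nset (v - 1))) - chi (deltaL LS.links (Nset v)))) e
        = ∑ v ∈ Finset.Icc 2 i, (c v : ℝ) *
            ((if e ∈ deltaL LS.links (Nset (v - 1)) then (1:ℝ) else 0)
              - (if e ∈ deltaL LS.links (Nset v) then (1:ℝ) else 0)) := by
      rw [Finset.sum_apply]
      exact Finset.sum_congr rfl fun v _ => by
        simp only [Pi.smul_apply, Pi.sub_apply, chi, zsmul_eq_mul]
    rw [Pi.sub_apply, expand]
    show (if e ∈ (L'.image φ).image ℓ then (1:ℝ) else 0) - (if e ∈ L' then (1:ℝ) else 0) = _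
    by_cases helinks : e ∈ LS.links
    · have helinks' := helinks
      rw [LinksSystem.links, Finset.mem_biUnion] at helinks
      obtain ⟨j, hjIcc, hPj⟩ := helinks
      by_cases hjk : j = k
      · rw [hjk, LinksSystem.P, if_pos rfl, Finset.mem_singleton] at hPj
        subst hPj
        have hnotL' : s(1, nn k) ∉ L' := by
          intro h
          have hx := (Finset.mem_sdiff.mp (hL'sub h)).2
          rw [Finset.mem_singleton, hlk] at hx
          exact hx rfl
        have hnotHat : s(1, nn k) ∉ (L'.image φ).image ℓ := by
          intro h
          rw [Finset.mem_image] at h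
          obtain ⟨r, hr, hlr⟩ := h
          obtain ⟨hrIcc, _⟩ := hRsub r hr
          have hP := (hℓ1 r (by rw [Finset.mem_Icc] at hrIcc ⊢; omega)).1
          rw [hlr] at hP
          exact snn_not_mem hk LS hrIcc hP
        have hmem : ∀ w, 1 ≤ w → w ≤ nn k - 1 → s(1, nn k) ∈ deltaL LS.links (Nset w) := by
          intro w h1 h2
          rw [mem_deltaL_iff _ le_rfl (by omega)]
          exact ⟨helinks', h1, by omega⟩
        rw [if_neg hnotHat, if_neg hnotL']
        have hz : ∀ v ∈ Finset.Icc 2 i, (c v : ℝ) *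
            ((if s(1, nn k) ∈ deltaL LS.links (Nset (v - 1)) then (1:ℝ) else 0)
              - (if s(1, nn k) ∈ deltaL LS.links (Nset v) then (1:ℝ) else 0)) = 0 := by
          intro v hv
          rw [Finset.mem_Icc] at hv
          rw [if_pos (hmem (v - 1) (by omega) (by omega)), if_pos (hmem v (by omega) (by omega))]
          ring
        rw [Finset.sum_congr rfl hz, Finset.sum_const_zero]
        norm_num
      · have hj2 : j ∈ Finset.Icc 1 (k - 1) := by
          rw [Finset.mem_Icc] at hjIcc ⊢; omega
        have hPj0 := hPj
        rw [LinksSystem.P, if_neg hjk, Finset.mem_image] at hPj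
        obtain ⟨t, htIcc, heq⟩ := hPj
        rw [Finset.mem_Icc] at htIcc
        have ht2 : t ≤ k / 2 := htIcc.2
        subst heq
        set a := LS.node j t with ha
        set b := LS.node j (t + 1) with hb
        have hfirst := LS.node_first j hj2
        have hlast := LS.node_last j hj2
        have hab : a < b := by
          have := node_strictmono hk LS hj2 (show t < t + 1 by omega) (by omega)
          omega
        have hat : a = 1 ↔ t = 0 := by
          constructor
          · intro h
            by_contra hne
            have := (node_bounds hk LS hj2 (by omega) ht2).1
            omega
          · intro h
            rw [ha, h, hfirst]
        have ha1 : 1 ≤ a := by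
          rcases Nat.eq_zero_or_pos t with h | h
          · omega
          · have := (node_bounds hk LS hj2 h ht2).1
            omega
        have hb2 : 2 ≤ b := by omega
        have hbn : b ≤ nn k := by
          have := node_mono_le hk LS hj2 (show t + 1 ≤ k / 2 + 1 by omega) le_rfl
          rw [hlast] at this
          omega
        have hbi : t + 1 ≤ k / 2 ∨ b = nn k := by
          rcases Nat.lt_or_ge (t + 1) (k / 2 + 1) with h | h
          · left; omega
          · right
            have h' : t + 1 = k / 2 + 1 := by omega
            rw [hb, h', hlast]
        have hδ : ∀ w, (s(a, b) ∈ deltaL LS.links (Nset w)) ↔ (a ≤ w ∧ w < b) := by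
          intro w
          rw [mem_deltaL_iff _ ha1 hab]
          simp only [helinks', true_and]
        have hPj' : s(a, b) ∈ LS.P j := hPj0
        have hL'iff : s(a, b) ∈ L' ↔ (j ∈ R ∧ a ≤ i ∧ i < b) := by
          constructor
          · intro h
            have hφe : φ s(a, b) = j := hφ j hjIcc _ hPj'
            have hdel := (Finset.mem_sdiff.mp (hL'sub h)).1
            rw [mem_deltaL_iff _ ha1 hab] at hdel
            exact ⟨Finset.mem_image.mpr ⟨_, h, hφe⟩, hdel.2⟩
          · rintro ⟨hjR, hai, hib⟩
            obtain ⟨hjIcc', e', he', hPe'⟩ := hRsub j hjR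
            have hdel := (Finset.mem_sdiff.mp (hL'sub he')).1
            rw [LinksSystem.P, if_neg hjk, Finset.mem_image] at hPe'
            obtain ⟨t', ht', heq'⟩ := hPe'
            rw [Finset.mem_Icc] at ht'
            rw [← heq'] at hdel he'
            have hab' : LS.node j t' < LS.node j (t' + 1) :=
              node_strictmono hk LS hj2 (by omega) (by omega)
            have ha1' : 1 ≤ LS.node j t' := by
              rcases Nat.eq_zero_or_pos t' with h | h
              · rw [h, hfirst]
              · have := (node_bounds hk LS hj2 h (by omega)).1
                omega
            rw [mem_deltaL_iff _ ha1' hab'] at hdel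
            obtain ⟨-, hai', hib'⟩ := hdel
            have htt : t = t' := by
              by_contra hne
              rcases Nat.lt_or_ge t t' with h | h
              · have := node_mono_le hk LS hj2 (show t + 1 ≤ t' by omega) (by omega)
                omega
              · have := node_mono_le hk LS hj2 (show t' + 1 ≤ t by omega) (by omega)
                omega
            subst htt
            exact he'
        have hLhat : s(a, b) ∈ (L'.image φ).image ℓ ↔ (j ∈ R ∧ t = 0) := by
          constructor
          · intro h
            rw [Finset.mem_image] at h
            obtain ⟨r, hr, hlr⟩ := h
            obtain ⟨hrIcc, -⟩ := hRsub r hr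
            have hrIccK : r ∈ Finset.Icc 1 k := by rw [Finset.mem_Icc] at hrIcc ⊢; omega
            obtain ⟨hlP, x, hlx⟩ := hℓ1 r hrIccK
            rw [hlr] at hlP hlx
            have hrj : r = j := classP_unique hk LS hrIccK hjIcc hlP hPj'
            subst hrj
            rw [Sym2.eq_iff] at hlx
            have ht0 : t = 0 := by
              rcases hlx with ⟨h1, h2⟩ | ⟨h1, h2⟩
              · exact hat.mp h1
              · omega
            exact ⟨hr, ht0⟩
          · rintro ⟨hjR, ht0⟩
            obtain ⟨hlP, x, hlx⟩ := hℓ1 j hjIcc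
            rw [LinksSystem.P, if_neg hjk, Finset.mem_image] at hlP
            obtain ⟨t'', ht'', heq2⟩ := hlP
            rw [Finset.mem_Icc] at ht''
            have ht''0 : t'' = 0 := by
              rw [hlx, Sym2.eq_iff] at heq2
              rcases heq2 with ⟨h1, h2⟩ | ⟨h1, h2⟩
              · by_contra h
                have := node_strictmono hk LS hj2 (show 0 < t'' by omega) (by omega)
                rw [hfirst] at this; omega
              · have := node_strictmono hk LS hj2 (show 0 < t'' + 1 by omega) (by omega)
                rw [hfirst] at this; omega
            subst ht''0
            subst ht0
            rw [Finset.mem_image]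
            exact ⟨j, hjR, heq2.symm.trans (by rw [← ha, ← hb])⟩
        have hca : 1 ≤ t → c a = (if j ∈ R then 1 else 0) := by
          intro ht1
          simp only [hc]
          by_cases hjR : j ∈ R
          · rw [if_pos hjR, if_pos]
            exact ⟨j, hjR, t, Finset.mem_Icc.mpr ⟨ht1, ht2⟩, ha.symm⟩
          · rw [if_neg hjR, if_neg]
            rintro ⟨rr, hrr, tt, htt, heqq⟩
            rw [Finset.mem_Icc] at htt
            have hrrIcc := (hRsub rr hrr).1
            have hun := internal_unique hk LS hrrIcc hj2 htt.1 htt.2 ht1 ht2 (heqq.trans ha)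
            exact hjR (by rw [← hun.1]; exact hrr)
        have hcb : t + 1 ≤ k / 2 → c b = (if j ∈ R then 1 else 0) := by
          intro ht1
          simp only [hc]
          by_cases hjR : j ∈ R
          · rw [if_pos hjR, if_pos]
            exact ⟨j, hjR, t + 1, Finset.mem_Icc.mpr ⟨by omega, ht1⟩, hb.symm⟩
          · rw [if_neg hjR, if_neg]
            rintro ⟨rr, hrr, tt, htt, heqq⟩
            rw [Finset.mem_Icc] at htt
            have hrrIcc := (hRsub rr hrr).1
            have hun := internal_unique hk LS hrrIcc hj2 htt.1 htt.2 (by omega) ht1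
              (heqq.trans hb)
            exact hjR (by rw [← hun.1]; exact hrr)
        have hstep : ∀ v ∈ Finset.Icc 2 i, (c v : ℝ) *
            ((if s(a, b) ∈ deltaL LS.links (Nset (v - 1)) then (1:ℝ) else 0)
              - (if s(a, b) ∈ deltaL LS.links (Nset v) then (1:ℝ) else 0))
            = (if v = b then (if j ∈ R then (1:ℝ) else 0) else 0)
              - (if v = a then (if j ∈ R then (1:ℝ) else 0) else 0) := by
          intro v hv
          rw [Finset.mem_Icc] at hv
          simp only [hδ]
          by_cases hvb : v = b
          · have h1 : t + 1 ≤ k / 2 := by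
              rcases hbi with h | h
              · exact h
              · omega
            rw [if_pos (show a ≤ v - 1 ∧ v - 1 < b by omega),
              if_neg (show ¬(a ≤ v ∧ v < b) by omega),
              if_pos hvb, if_neg (show ¬(v = a) by omega), hvb, hcb h1]
            split_ifs <;> norm_num
          · by_cases hva : v = a
            · have ht1 : 1 ≤ t := by
                by_contra h
                have h0 : t = 0 := by omega
                have := hat.mpr h0
                omega
              rw [if_neg (show ¬(a ≤ v - 1 ∧ v - 1 < b) by omega),
                if_pos (show a ≤ v ∧ v < b by omega),
                if_neg hvb, if_pos hva, hva, hca ht1]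
              split_ifs <;> norm_num
            · have hiff : (a ≤ v - 1 ∧ v - 1 < b) ↔ (a ≤ v ∧ v < b) := by omega
              rw [if_neg hvb, if_neg hva, if_congr hiff rfl rfl]
              ring
        rw [Finset.sum_congr rfl hstep, Finset.sum_sub_distrib,
          Finset.sum_ite_eq' (Finset.Icc 2 i) b, Finset.sum_ite_eq' (Finset.Icc 2 i) a,
          if_congr hLhat rfl rfl, if_congr hL'iff rfl rfl]
        simp only [Finset.mem_Icc]
        by_cases hjR : j ∈ R
        · simp only [hjR, true_and, if_true]
          have hA : (a = 1 ∧ t = 0) ∨ (2 ≤ a ∧ 1 ≤ t) := by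
            rcases Nat.eq_zero_or_pos t with h | h
            · exact Or.inl ⟨hat.mpr h, h⟩
            · refine Or.inr ⟨?_, h⟩
              by_contra hcon
              have := hat.mp (by omega)
              omega
          split_ifs <;> rcases hA with ⟨h1, h0⟩ | ⟨h1, h0⟩ <;>
            first
              | (exfalso; omega)
              | norm_num
        · simp only [hjR, false_and, if_false]
          simp
    · have h1 : e ∉ L' := fun h =>
        helinks (Finset.mem_filter.mp ((Finset.mem_sdiff.mp (hL'sub h)).1)).1
      have h2 : e ∉ (L'.image φ).image ℓ := by
        intro h
        rw [Finset.mem_image] at h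
        obtain ⟨j, hj, rfl⟩ := h
        obtain ⟨hjIcc, _⟩ := hRsub j hj
        have hjIccK : j ∈ Finset.Icc 1 k := by rw [Finset.mem_Icc] at hjIcc ⊢; omega
        exact helinks (Finset.mem_biUnion.mpr ⟨j, hjIccK, (hℓ1 j hjIccK).1⟩)
      have h3 : ∀ w, e ∉ deltaL LS.links (Nset w) := fun w h =>
        helinks (Finset.mem_filter.mp h).1
      rw [if_neg h2, if_neg h1]
      have hz : ∀ v ∈ Finset.Icc 2 i, (c v : ℝ) *
          ((if e ∈ deltaL LS.links (Nset (v - 1)) then (1:ℝ) else 0)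
            - (if e ∈ deltaL LS.links (Nset v) then (1:ℝ) else 0)) = 0 := by
        intro v _
        rw [if_neg (h3 _), if_neg (h3 _)]
        ring
      rw [Finset.sum_congr rfl hz, Finset.sum_const_zero]
      norm_num
  rw [key]
  refine Submodule.sum_mem _ fun v hv => ?_
  obtain ⟨hv2, hvi⟩ := Finset.mem_Icc.mp hv
  refine Submodule.smul_mem _ _ (Submodule.sub_mem _ ?_ ?_)
  · exact Submodule.subset_span ⟨v - 1, ⟨by omega, by omega⟩, rfl⟩
  · exact Submodule.subset_span ⟨v, ⟨by omega, by omega⟩, rfl⟩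

end CoverSmallCuts
end

section
/- For every links system L with links indexed as described, the m×m rational 0–1 matrix A — whose rows 1,…,k−1 are indexed by the cuts δ_L(Q_1),…,δ_L(Q_{k−1}), whose rows k,…,m are indexed by the cuts δ_L(N_1),…,δ_L(N_{n−1}), whose columns are indexed by the links ℓ_1,…,ℓ_m, and whose (r,c) entry is 1 if and only if link ℓ_c lies in the cut indexing row r — is nonsingular, i.e., det A ≠ 0 and A has rank m. -/
open Finset

namespace CoverSmallCuts

/-!
Let `y` be a row vector with `yᵀ A = 0`, with weights `q_j` on the Q-cuts and `p_i` on the nested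
cuts. The column of a link `{v, u}` (`v < u`) says that the weights of the Q-cuts separating `v`
from `u`, plus `p_v + ⋯ + p_{u-1}`, add up to zero. A path `P_i` has `k/2` internal nodes and
meets `k/2` Q-sets, so its internal nodes lie in distinct Q-sets; summing the equations of its
links and subtracting that of `{1, n}` leaves twice the sum of `q_j` over the cyclic window
`j ≡ i, …, i + k/2 - 1 (mod k - 1)`. Consecutive windows then give `q_j = q_{j + k/2}`, and since
`2 · (k/2) ≡ 1 (mod k - 1)` the vector `q` is constant, hence zero. Afterwards each link equation
says that the prefix sums of `p` agree at the two ends of the link, so they vanish at every node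
and `p = 0`.
-/

theorem _root_.Function.Periodic.eq_zero_of_sum_range_eq_zero {F : Type*} [Field F] [CharZero F]
    {f : ℕ → F} {K h : ℕ} (hf : Function.Periodic f K) (hK : K + 1 = 2 * h)
    (hsum : ∀ a < K, ∑ s ∈ range h, f (a + s) = 0) (a : ℕ) : f a = 0 := by
  have hsum' : ∀ a, ∑ s ∈ range h, f (a + s) = 0 := fun a => by
    rw [← hsum (a % K) (Nat.mod_lt a (by omega))]
    refine sum_congr rfl fun s _ => ?_
    rw [← hf.map_mod_nat (a % K + s), Nat.mod_add_mod, hf.map_mod_nat]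
  -- consecutive windows differ by `f (a + h) - f a`
  have hshift : ∀ a, f (a + h) = f a := fun a => by
    have h1 := hsum' a
    have h2 := hsum' (a + 1)
    obtain ⟨h', rfl⟩ : ∃ h', h = h' + 1 := ⟨h - 1, by omega⟩
    rw [sum_range_succ'] at h1
    rw [sum_range_succ] at h2
    simp only [add_assoc, add_comm 1] at h1 h2
    linear_combination h2 - h1
  -- `2h ≡ 1 (mod K)`, so two shifts by `h` make a shift by one
  have hstep : ∀ a, f (a + 1) = f a := fun a => by
    rw [← hf (a + 1), show a + 1 + K = a + h + h by omega, hshift, hshift]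
  have hconst : ∀ a, f a = f 0 := fun a => by
    induction a with
    | zero => rfl
    | succ a ih => rw [hstep, ih]
  have h0 := hsum' 0
  simp only [hconst, sum_const, card_range, nsmul_eq_mul, mul_eq_zero, Nat.cast_eq_zero] at h0
  rw [hconst]
  exact h0.resolve_left (by omega)

lemma mem_deltaL_iff_s12 {F : Finset (Sym2 ℕ)} {S : Finset ℕ} {v u : ℕ} :
    s(v, u) ∈ deltaL F S ↔ s(v, u) ∈ F ∧ ¬(v ∈ S ↔ u ∈ S) := by
  classical
  rw [deltaL, mem_filter]
  constructor
  · rintro ⟨hF, a, b, heq, ha, hb⟩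
    rcases Sym2.eq_iff.mp heq with ⟨rfl, rfl⟩ | ⟨rfl, rfl⟩ <;> exact ⟨hF, by tauto⟩
  · rintro ⟨hF, hsep⟩
    by_cases hv : v ∈ S
    · exact ⟨hF, v, u, rfl, hv, by tauto⟩
    · exact ⟨hF, u, v, Sym2.eq_swap, by tauto, hv⟩

lemma nn_eq {k : ℕ} (hke : Even k) : nn k = 2 + (k - 1) * (k / 2) := by
  have h2 : k * (k - 1) = 2 * ((k - 1) * (k / 2)) := by
    nth_rewrite 1 [← Nat.two_mul_div_two_of_even hke]
    ring
  rw [nn, h2, Nat.mul_div_cancel_left _ two_pos]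

lemma mm_eq {k : ℕ} (hk : 1 ≤ k) : mm k = k - 1 + (nn k - 1) := by
  unfold mm nn
  omega

/-- Zero-based: a node `v ≥ 2` lies in `Q_{qIndex k v + 1}`. -/
def qIndex (k v : ℕ) : ℕ := (v - 2) / (k / 2)

lemma mem_Qset_succ_iff {k v j : ℕ} (hk : 2 ≤ k) (hv : 2 ≤ v) :
    v ∈ Qset k (j + 1) ↔ qIndex k v = j := by
  rw [Qset, qIndex, mem_Icc, Nat.div_eq_iff (by omega), Nat.add_sub_cancel, add_one_mul]
  omega

lemma one_notMem_Qset (k j : ℕ) : 1 ∉ Qset k j := by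
  simp only [Qset, mem_Icc]
  omega

lemma nn_notMem_Qset {k j : ℕ} (hke : Even k) (hj : j ≤ k - 1) : nn k ∉ Qset k j := by
  have := Nat.mul_le_mul_right (k / 2) hj
  simp only [Qset, mem_Icc, nn_eq hke]
  omega

lemma qIndex_lt {k v : ℕ} (hke : Even k) (hk : 2 ≤ k) (hv : v ∈ Icc 2 (nn k - 1)) :
    qIndex k v < k - 1 := by
  rw [mem_Icc, nn_eq hke] at hv
  rw [qIndex, Nat.div_lt_iff_lt_mul (by omega)]
  omega

/-- Zero-based indices of the Q-sets met by the path `P_i`, for `h = k/2` and `K = k - 1`. -/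
def window (h K i : ℕ) : Finset ℕ := (range h).image fun s => (i - 1 + s) % K

lemma injOn_window {h K : ℕ} (hhK : h ≤ K) (i : ℕ) :
    Set.InjOn (fun s => (i - 1 + s) % K) (range h) := fun s hs s' hs' hss' => by
  simp only [coe_range, Set.mem_Iio] at hs hs'
  exact (Nat.ModEq.add_left_cancel' _ hss').eq_of_lt_of_lt (by omega) (by omega)

lemma card_window {h K : ℕ} (hhK : h ≤ K) (i : ℕ) : #(window h K i) = h := by
  rw [window, card_image_of_injOn (injOn_window hhK i), card_range]

lemma sum_window {M : Type*} [AddCommMonoid M] {h K : ℕ} (hhK : h ≤ K) (i : ℕ) (f : ℕ → M) :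
    ∑ j ∈ window h K i, f j = ∑ s ∈ range h, f ((i - 1 + s) % K) :=
  sum_image (injOn_window hhK i)

lemma mem_window_iff {h K i j : ℕ} (hK : K + 1 = 2 * h) (hi : i ∈ Icc 1 K) (hj : j < K) :
    j ∈ window h K i ↔
      (i ≤ j + 1 ∧ j + 1 ≤ min (i + h - 1) K) ∨ (j + 1 < i ∧ j + 1 ≤ i - h) := by
  rw [mem_Icc] at hi
  simp only [window, mem_image, mem_range]
  constructor
  · rintro ⟨s, hs, rfl⟩
    rcases lt_or_ge (i - 1 + s) K with hc | hc
    · rw [Nat.mod_eq_of_lt hc]; omega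
    · rw [Nat.mod_eq_sub_mod hc, Nat.mod_eq_of_lt (by omega)]; omega
  · rintro (⟨h1, h2⟩ | ⟨h1, h2⟩)
    · exact ⟨j + 1 - i, by omega, by rw [Nat.mod_eq_of_lt (by omega)]; omega⟩
    · refine ⟨K + j + 1 - i, by omega, ?_⟩
      rw [show i - 1 + (K + j + 1 - i) = j + K by omega, Nat.add_mod_right, Nat.mod_eq_of_lt hj]

section Weights

variable {R : Type*} [AddCommGroup R] (k : ℕ)

/-- The cut indexing the zero-based row `r` of the matrix. -/
noncomputable def rowCut (L : Finset (Sym2 ℕ)) (r : ℕ) : Finset (Sym2 ℕ) :=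
  if r < k - 1 then deltaL L (Qset k (r + 1)) else deltaL L (Nset (r - (k - 1) + 1))

/-- The entry of `wᵀ A` in the column of the link `e`, for weights `w` on the zero-based rows. -/
noncomputable def cutLoad (L : Finset (Sym2 ℕ)) (w : ℕ → R) (e : Sym2 ℕ) : R :=
  ∑ r ∈ range (mm k), if e ∈ rowCut k L r then w r else 0

def qWeight (w : ℕ → R) (v : ℕ) : R :=
  ∑ j ∈ range (k - 1), if v ∈ Qset k (j + 1) then w j else 0

/-- Prefix sums of the weights of the rows `δ_L(N_1), δ_L(N_2), …`. -/
def nWeight (w : ℕ → R) (x : ℕ) : R :=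
  ∑ i ∈ range x, w (k - 1 + i)

variable {k}

lemma nWeight_zero (w : ℕ → R) : nWeight k w 0 = 0 :=
  sum_range_zero _

lemma cutLoad_eq {L : Finset (Sym2 ℕ)} {w : ℕ → R} {v u : ℕ} (hk : 1 ≤ k) (he : s(v, u) ∈ L)
    (hv : 1 ≤ v) (hvu : v ≤ u) (hu : u ≤ nn k)
    (hQ : ∀ j < k - 1, ¬(v ∈ Qset k (j + 1) ∧ u ∈ Qset k (j + 1))) :
    cutLoad k L w s(v, u) =
      qWeight k w v + qWeight k w u + (nWeight k w (u - 1) - nWeight k w (v - 1)) := by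
  rw [cutLoad, mm_eq hk, sum_range_add]
  congr 1
  · rw [qWeight, qWeight, ← sum_add_distrib]
    refine sum_congr rfl fun j hj => ?_
    rw [mem_range] at hj
    have hQj := hQ j hj
    simp only [rowCut, if_pos hj, mem_deltaL_iff_s12, he, true_and]
    split_ifs <;> simp_all
  · have hcut : ∀ x, s(v, u) ∈ rowCut k L (k - 1 + x) ↔ x ∈ Ico (v - 1) (u - 1) := fun x => by
      simp only [rowCut, if_neg (Nat.not_lt.mpr (Nat.le_add_right _ x)), mem_deltaL_iff_s12, he,
        true_and, Nset, mem_Icc, mem_Ico]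
      omega
    simp_rw [hcut]
    rw [sum_ite_mem, inter_eq_right.mpr, nWeight, nWeight, sum_Ico_eq_sub _ (by omega)]
    intro x
    simp only [mem_Ico, mem_range]
    omega

lemma qWeight_one (w : ℕ → R) : qWeight k w 1 = 0 :=
  sum_eq_zero fun j _ => if_neg (one_notMem_Qset k (j + 1))

lemma qWeight_nn (hke : Even k) (w : ℕ → R) : qWeight k w (nn k) = 0 :=
  sum_eq_zero fun j hj => if_neg (nn_notMem_Qset hke (by rw [mem_range] at hj; omega))

lemma qWeight_eq (hke : Even k) (hk : 2 ≤ k) (w : ℕ → R) {v : ℕ} (hv : v ∈ Icc 2 (nn k - 1)) :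
    qWeight k w v = w (qIndex k v) := by
  simp only [qWeight, mem_Qset_succ_iff hk (mem_Icc.mp hv).1, sum_ite_eq,
    if_pos (mem_range.mpr (qIndex_lt hke hk hv))]

end Weights

namespace LinksSystem

variable {k : ℕ} (LS : LinksSystem k)

lemma node_lt_node {i : ℕ} (hi : i ∈ Icc 1 (k - 1)) {t t' : ℕ} (htt' : t < t')
    (ht' : t' ≤ k / 2 + 1) : LS.node i t < LS.node i t' := by
  induction t', htt' using Nat.le_induction with
  | base => exact LS.node_mono i hi t (by omega)
  | succ t' htt' ih => exact (ih (by omega)).trans (LS.node_mono i hi t' (by omega))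

lemma node_mem_Icc {i t : ℕ} (hi : i ∈ Icc 1 (k - 1)) (ht : t ∈ Icc 1 (k / 2)) :
    LS.node i t ∈ Icc 2 (nn k - 1) := by
  rw [mem_Icc] at ht ⊢
  have h0 := LS.node_lt_node hi (t := 0) (t' := t) (by omega) (by omega)
  have h1 := LS.node_lt_node hi (t := t) (t' := k / 2 + 1) (by omega) le_rfl
  rw [LS.node_first i hi] at h0
  rw [LS.node_last i hi] at h1
  omega

lemma eq_of_node_eq {i i' t t' : ℕ} (hi : i ∈ Icc 1 (k - 1)) (hi' : i' ∈ Icc 1 (k - 1))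
    (ht : t ∈ Icc 1 (k / 2)) (ht' : t' ∈ Icc 1 (k / 2)) (h : LS.node i t = LS.node i' t') :
    i = i' ∧ t = t' := by
  obtain rfl : i = i' :=
    (LS.cover _ (LS.node_mem_Icc hi ht)).unique ⟨hi, t, ht, rfl⟩ ⟨hi', t', ht', h.symm⟩
  rw [mem_Icc] at ht ht'
  refine ⟨rfl, ?_⟩
  rcases lt_trichotomy t t' with hlt | heq | hlt
  · exact absurd h (LS.node_lt_node hi hlt (by omega)).ne
  · exact heq
  · exact absurd h (LS.node_lt_node hi hlt (by omega)).ne'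

lemma edge_mem_links {i t : ℕ} (hi : i ∈ Icc 1 (k - 1)) (ht : t ≤ k / 2) :
    s(LS.node i t, LS.node i (t + 1)) ∈ LS.links := by
  rw [mem_Icc] at hi
  rw [links, mem_biUnion]
  refine ⟨i, mem_Icc.mpr (by omega), ?_⟩
  rw [P, if_neg (by omega), mem_image]
  exact ⟨t, mem_Icc.mpr ⟨t.zero_le, ht⟩, rfl⟩

lemma st_mem_links (hk : 1 ≤ k) : s(1, nn k) ∈ LS.links := by
  rw [links, mem_biUnion]
  exact ⟨k, mem_Icc.mpr ⟨hk, le_rfl⟩, by rw [P, if_pos rfl, mem_singleton]⟩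

lemma mem_links {e : Sym2 ℕ} (he : e ∈ LS.links) :
    e = s(1, nn k) ∨ ∃ i ∈ Icc 1 (k - 1), ∃ t ≤ k / 2, e = s(LS.node i t, LS.node i (t + 1)) := by
  rw [links, mem_biUnion] at he
  obtain ⟨i, hi, he⟩ := he
  rw [P] at he
  split_ifs at he with hik
  · exact Or.inl (mem_singleton.mp he)
  · obtain ⟨t, ht, rfl⟩ := mem_image.mp he
    rw [mem_Icc] at hi ht
    exact Or.inr ⟨i, mem_Icc.mpr (by omega), t, ht.2, rfl⟩

lemma eq_first_edge_of_mem_P {i b : ℕ} (hi : i ∈ Icc 1 (k - 1)) (he : s(1, b) ∈ LS.P i) :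
    s(1, b) = s(LS.node i 0, LS.node i 1) := by
  have hik : i ≠ k := by rw [mem_Icc] at hi; omega
  rw [P, if_neg hik, mem_image] at he
  obtain ⟨t, ht, he⟩ := he
  rw [mem_Icc] at ht
  have hpos : ∀ t', 0 < t' → t' ≤ k / 2 + 1 → 1 < LS.node i t' := fun t' h0 h1 => by
    simpa only [LS.node_first i hi] using LS.node_lt_node hi h0 h1
  rcases Sym2.eq_iff.mp he with ⟨h1, rfl⟩ | ⟨-, h1⟩
  · obtain rfl : t = 0 := by
      by_contra h0
      exact (hpos t (by omega) (by omega)).ne' h1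
    rw [h1]
  · exact absurd h1 (hpos (t + 1) (by omega) (by omega)).ne'

lemma eq_edge_of_mem_links {i t b : ℕ} (hi : i ∈ Icc 1 (k - 1)) (ht : t ∈ Icc 1 (k / 2))
    (he : s(LS.node i t, b) ∈ LS.links) (hb : LS.node i t < b) : b = LS.node i (t + 1) := by
  have hv := LS.node_mem_Icc hi ht
  rw [mem_Icc] at hv
  rcases LS.mem_links he with he | ⟨i', hi', t', ht', he⟩
  · rcases Sym2.eq_iff.mp he with ⟨h1, -⟩ | ⟨h1, -⟩ <;> omega
  · have hlt := LS.node_lt_node hi' (t := t') (t' := t' + 1) (by omega) (by omega)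
    rcases Sym2.eq_iff.mp he with ⟨h1, rfl⟩ | ⟨h1, rfl⟩
    · have ht'0 : t' ≠ 0 := by
        rintro rfl
        rw [LS.node_first i' hi'] at h1
        omega
      obtain ⟨rfl, rfl⟩ := LS.eq_of_node_eq hi hi' ht (mem_Icc.mpr ⟨by omega, ht'⟩) h1
      rfl
    · omega

lemma exists_index_of_mem_links (hk : 1 ≤ k) {ℓ : ℕ → Sym2 ℕ}
    (hℓ1 : ∀ i ∈ Icc 1 k, ℓ i ∈ LS.P i ∧ ∃ b, ℓ i = s(1, b))
    (hℓ2 : ∀ v ∈ Icc 2 (nn k - 1), ℓ (k + v - 1) ∈ LS.links ∧ ∃ b, v < b ∧ ℓ (k + v - 1) = s(v, b))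
    {e : Sym2 ℕ} (he : e ∈ LS.links) : ∃ c < mm k, ℓ (c + 1) = e := by
  have hmm := mm_eq hk
  have hnn : 2 ≤ nn k := Nat.le_add_right 2 _
  rcases LS.mem_links he with rfl | ⟨i, hi, t, ht, rfl⟩
  · refine ⟨k - 1, by omega, ?_⟩
    have hP := (hℓ1 k (mem_Icc.mpr ⟨hk, le_rfl⟩)).1
    rw [P, if_pos rfl, mem_singleton] at hP
    rwa [Nat.sub_add_cancel hk]
  rcases Nat.eq_zero_or_pos t with rfl | htpos
  · have hik : i ∈ Icc 1 k := by rw [mem_Icc] at hi ⊢; omega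
    obtain ⟨hP, b, hb⟩ := hℓ1 i hik
    rw [hb] at hP
    refine ⟨i - 1, by rw [mem_Icc] at hi; omega, ?_⟩
    rw [Nat.sub_add_cancel (mem_Icc.mp hi).1]
    exact hb.trans (LS.eq_first_edge_of_mem_P hi hP)
  · have ht1 : t ∈ Icc 1 (k / 2) := mem_Icc.mpr ⟨htpos, ht⟩
    have hv := LS.node_mem_Icc hi ht1
    obtain ⟨hL, b, hvb, hb⟩ := hℓ2 _ hv
    rw [hb] at hL
    rw [mem_Icc] at hv
    refine ⟨k + LS.node i t - 2, by omega, ?_⟩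
    rw [show k + LS.node i t - 2 + 1 = k + LS.node i t - 1 by omega, hb,
      LS.eq_edge_of_mem_links hi ht1 hL hvb]

lemma node_mem_Icc_one_nn {i t : ℕ} (hi : i ∈ Icc 1 (k - 1)) (ht : t ≤ k / 2 + 1) :
    LS.node i t ∈ Icc 1 (nn k) := by
  rw [mem_Icc, ← LS.node_first i hi, ← LS.node_last i hi]
  constructor
  · rcases Nat.eq_zero_or_pos t with rfl | h0
    · exact le_rfl
    · exact (LS.node_lt_node hi h0 ht).le
  · rcases eq_or_lt_of_le ht with rfl | hlt
    · exact le_rfl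
    · exact (LS.node_lt_node hi hlt le_rfl).le

lemma image_qIndex_node (hke : Even k) (hk : 2 ≤ k) {i : ℕ} (hi : i ∈ Icc 1 (k - 1)) :
    (range (k / 2)).image (fun t => qIndex k (LS.node i (t + 1))) = window (k / 2) (k - 1) i := by
  have hK : k - 1 + 1 = 2 * (k / 2) := by have := Nat.two_mul_div_two_of_even hke; omega
  ext j
  constructor
  · rw [mem_image]
    rintro ⟨t, ht, rfl⟩
    rw [mem_range] at ht
    have ht1 : t + 1 ∈ Icc 1 (k / 2) := mem_Icc.mpr ⟨by omega, by omega⟩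
    have hv := LS.node_mem_Icc hi ht1
    have hj := qIndex_lt hke hk hv
    rw [mem_window_iff hK hi hj, ← LS.meetsQ i hi _ (mem_Icc.mpr ⟨by omega, by omega⟩)]
    exact ⟨t + 1, ht1, (mem_Qset_succ_iff hk (mem_Icc.mp hv).1).mpr rfl⟩
  · intro hj
    have hjK : j < k - 1 := by
      obtain ⟨s, -, rfl⟩ := mem_image.mp hj
      exact Nat.mod_lt _ (by omega)
    rw [mem_window_iff hK hi hjK, ← LS.meetsQ i hi _ (mem_Icc.mpr ⟨by omega, by omega⟩)] at hj
    obtain ⟨t, ht, hQ⟩ := hj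
    have hv := LS.node_mem_Icc hi ht
    rw [mem_Icc] at ht
    refine mem_image.mpr ⟨t - 1, mem_range.mpr (by omega), ?_⟩
    rw [Nat.sub_add_cancel ht.1]
    exact (mem_Qset_succ_iff hk (mem_Icc.mp hv).1).mp hQ

/-- `P_i` has `h` internal nodes and meets `h` Q-sets, so it meets each of them only once. -/
lemma injOn_qIndex_node (hke : Even k) (hk : 2 ≤ k) {i : ℕ} (hi : i ∈ Icc 1 (k - 1)) :
    Set.InjOn (fun t => qIndex k (LS.node i (t + 1))) (range (k / 2)) :=
  injOn_of_card_image_eq <| by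
    rw [LS.image_qIndex_node hke hk hi, card_window (by omega), card_range]

lemma not_mem_Qset_node_and_node_succ (hke : Even k) (hk : 2 ≤ k) {i t j : ℕ}
    (hi : i ∈ Icc 1 (k - 1)) (ht : t ≤ k / 2) (hj : j < k - 1) :
    ¬(LS.node i t ∈ Qset k (j + 1) ∧ LS.node i (t + 1) ∈ Qset k (j + 1)) := by
  rintro ⟨h1, h2⟩
  rcases Nat.eq_zero_or_pos t with rfl | htpos
  · rw [LS.node_first i hi] at h1
    exact one_notMem_Qset _ _ h1
  rcases eq_or_lt_of_le ht with rfl | htlt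
  · rw [LS.node_last i hi] at h2
    exact nn_notMem_Qset hke (by omega) h2
  have hv1 := LS.node_mem_Icc hi (t := t) (mem_Icc.mpr ⟨htpos, ht⟩)
  have hv2 := LS.node_mem_Icc hi (t := t + 1) (mem_Icc.mpr ⟨by omega, htlt⟩)
  rw [mem_Qset_succ_iff hk (mem_Icc.mp hv1).1] at h1
  rw [mem_Qset_succ_iff hk (mem_Icc.mp hv2).1] at h2
  have := LS.injOn_qIndex_node hke hk hi (x₁ := t - 1) (x₂ := t)
    (mem_range.mpr (by omega)) (mem_range.mpr htlt)
    (show qIndex k (LS.node i (t - 1 + 1)) = qIndex k (LS.node i (t + 1)) by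
      rw [Nat.sub_add_cancel htpos, h1, h2])
  omega

section AddCommGroup

variable {R : Type*} [AddCommGroup R]

lemma cutLoad_edge (hke : Even k) (hk : 2 ≤ k) {i t : ℕ} (hi : i ∈ Icc 1 (k - 1))
    (ht : t ≤ k / 2) (w : ℕ → R) :
    cutLoad k LS.links w s(LS.node i t, LS.node i (t + 1)) =
      qWeight k w (LS.node i t) + qWeight k w (LS.node i (t + 1)) +
        (nWeight k w (LS.node i (t + 1) - 1) - nWeight k w (LS.node i t - 1)) :=
  cutLoad_eq (by omega) (LS.edge_mem_links hi ht)
    (mem_Icc.mp (LS.node_mem_Icc_one_nn hi (by omega))).1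
    (LS.node_lt_node hi (Nat.lt_succ_self t) (by omega)).le
    (mem_Icc.mp (LS.node_mem_Icc_one_nn hi (by omega))).2
    fun _ hj => LS.not_mem_Qset_node_and_node_succ hke hk hi ht hj

/-- Summing the columns of the links of `P_i`: the nested cuts telescope, and each internal node
of `P_i` contributes the weight of its Q-set twice, once for each of its two links. -/
lemma sum_cutLoad_path (hke : Even k) (hk : 2 ≤ k) {i : ℕ} (hi : i ∈ Icc 1 (k - 1))
    (w : ℕ → R) :
    ∑ t ∈ range (k / 2 + 1), cutLoad k LS.links w s(LS.node i t, LS.node i (t + 1)) =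
      2 • ∑ s ∈ range (k / 2), w ((i - 1 + s) % (k - 1)) + nWeight k w (nn k - 1) := by
  have hinner : ∑ t ∈ range (k / 2), qWeight k w (LS.node i (t + 1)) =
      ∑ s ∈ range (k / 2), w ((i - 1 + s) % (k - 1)) := by
    rw [← sum_window (by omega), ← LS.image_qIndex_node hke hk hi,
      sum_image (LS.injOn_qIndex_node hke hk hi)]
    refine sum_congr rfl fun t ht => qWeight_eq hke hk w (LS.node_mem_Icc hi ?_)
    rw [mem_range] at ht
    exact mem_Icc.mpr ⟨by omega, by omega⟩
  rw [sum_congr rfl fun t ht => LS.cutLoad_edge hke hk hi (by rw [mem_range] at ht; omega) w,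
    sum_add_distrib, sum_range_sub (fun t => nWeight k w (LS.node i t - 1)), sum_add_distrib,
    sum_range_succ', sum_range_succ (fun t => qWeight k w (LS.node i (t + 1))), hinner,
    LS.node_first i hi, LS.node_last i hi, qWeight_one, qWeight_nn hke, Nat.sub_self, nWeight_zero,
    two_nsmul]
  abel

lemma nWeight_nn_eq_zero (hke : Even k) (hk : 1 ≤ k) {w : ℕ → R}
    (hw : ∀ e ∈ LS.links, cutLoad k LS.links w e = 0) : nWeight k w (nn k - 1) = 0 := by
  have hst := hw _ (LS.st_mem_links hk)
  rwa [cutLoad_eq hk (LS.st_mem_links hk) le_rfl (by unfold nn; omega) le_rfl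
    (fun _ _ h => one_notMem_Qset _ _ h.1), qWeight_one, qWeight_nn hke, Nat.sub_self,
    nWeight_zero, zero_add, zero_add, sub_zero] at hst

end AddCommGroup

section Field

variable {R : Type*} [Field R] [CharZero R]

lemma eq_zero_of_lt_of_cutLoad_eq_zero (hke : Even k) (hk : 2 ≤ k) {w : ℕ → R}
    (hw : ∀ e ∈ LS.links, cutLoad k LS.links w e = 0) {j : ℕ} (hj : j < k - 1) : w j = 0 := by
  have hK : k - 1 + 1 = 2 * (k / 2) := by have := Nat.two_mul_div_two_of_even hke; omega
  have hwin : ∀ a < k - 1, ∑ s ∈ range (k / 2), w ((a + s) % (k - 1)) = 0 := fun a ha => by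
    have hpath := LS.sum_cutLoad_path hke hk (i := a + 1) (mem_Icc.mpr ⟨by omega, by omega⟩) w
    rw [sum_eq_zero fun t ht => hw _ (LS.edge_mem_links (mem_Icc.mpr ⟨by omega, by omega⟩)
        (by rw [mem_range] at ht; omega)),
      LS.nWeight_nn_eq_zero hke (by omega) hw, add_zero, two_nsmul, eq_comm, add_self_eq_zero,
      Nat.add_sub_cancel] at hpath
    exact hpath
  simpa [Nat.mod_eq_of_lt hj] using
    Function.Periodic.eq_zero_of_sum_range_eq_zero (f := fun a => w (a % (k - 1)))
      (fun a => by simp) hK hwin j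

lemma nWeight_node_eq_zero (hke : Even k) (hk : 2 ≤ k) {w : ℕ → R}
    (hw : ∀ e ∈ LS.links, cutLoad k LS.links w e = 0) {i : ℕ} (hi : i ∈ Icc 1 (k - 1)) {t : ℕ}
    (ht : t ≤ k / 2 + 1) : nWeight k w (LS.node i t - 1) = 0 := by
  have hq : ∀ v, qWeight k w v = 0 := fun v =>
    sum_eq_zero fun j hj => by
      rw [LS.eq_zero_of_lt_of_cutLoad_eq_zero hke hk hw (mem_range.mp hj), ite_self]
  induction t with
  | zero => rw [LS.node_first i hi, Nat.sub_self, nWeight_zero]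
  | succ t ih =>
    have hedge := hw _ (LS.edge_mem_links hi (t := t) (by omega))
    rwa [LS.cutLoad_edge hke hk hi (by omega), hq, hq, ih (by omega), zero_add, zero_add,
      sub_zero] at hedge

lemma nWeight_eq_zero (hke : Even k) (hk : 2 ≤ k) {w : ℕ → R}
    (hw : ∀ e ∈ LS.links, cutLoad k LS.links w e = 0) {x : ℕ} (hx : x ≤ nn k - 1) :
    nWeight k w x = 0 := by
  rcases Nat.eq_zero_or_pos x with rfl | hx0
  · exact nWeight_zero w
  rcases eq_or_lt_of_le hx with rfl | hxn
  · exact LS.nWeight_nn_eq_zero hke (by omega) hw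
  obtain ⟨i, ⟨hi, t, ht, hnode⟩, -⟩ := LS.cover (x + 1) (mem_Icc.mpr ⟨by omega, by omega⟩)
  simpa [hnode] using LS.nWeight_node_eq_zero hke hk hw hi (t := t) (by rw [mem_Icc] at ht; omega)

theorem eq_zero_of_cutLoad_eq_zero (hke : Even k) (hk : 2 ≤ k) {w : ℕ → R}
    (hw : ∀ e ∈ LS.links, cutLoad k LS.links w e = 0) {r : ℕ} (hr : r < mm k) : w r = 0 := by
  rcases lt_or_ge r (k - 1) with hrK | hrK
  · exact LS.eq_zero_of_lt_of_cutLoad_eq_zero hke hk hw hrK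
  obtain ⟨x, rfl⟩ := Nat.exists_eq_add_of_le hrK
  have hx : x + 1 ≤ nn k - 1 := by rw [mm_eq (by omega)] at hr; omega
  have hsucc := LS.nWeight_eq_zero hke hk hw hx
  rwa [nWeight, sum_range_succ, ← nWeight, LS.nWeight_eq_zero hke hk hw (by omega),
    zero_add] at hsucc

end Field

end LinksSystem

lemma vecMul_apply_eq_cutLoad {R : Type*} [CommRing R] {k : ℕ} {L : Finset (Sym2 ℕ)}
    {ℓ : ℕ → Sym2 ℕ} {A : Matrix (Fin (mm k)) (Fin (mm k)) R}
    (hA : ∀ r c : Fin (mm k), A r c = if ℓ ((c : ℕ) + 1) ∈ rowCut k L r then 1 else 0)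
    (y : Fin (mm k) → R) (c : Fin (mm k)) :
    Matrix.vecMul y A c = cutLoad k L (Function.extend Fin.val y 0) (ℓ (c + 1)) := by
  simp only [Matrix.vecMul, dotProduct, hA, mul_ite, mul_one, mul_zero, cutLoad]
  rw [← Fin.sum_univ_eq_sum_range]
  simp only [Fin.val_injective.extend_apply]

/-- for every links system with links indexed as described, the `m × m`
rational 0-1 matrix `A` — rows `1, …, k-1` indexed by the cuts `δ_L(Q_1), …, δ_L(Q_{k-1})`,
rows `k, …, m` indexed by the cuts `δ_L(N_1), …, δ_L(N_{n-1})`, columns indexed by the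
links `ℓ_1, …, ℓ_m`, with `(r,c)` entry `1` iff link `ℓ_c` lies in the cut indexing row
`r` — is nonsingular: `det A ≠ 0` and `A` has rank `m`. -/
theorem statement12 (k : ℕ) (hk : 4 ≤ k) (hke : Even k) (LS : LinksSystem k)
    (ℓ : ℕ → Sym2 ℕ)
    (hℓ1 : ∀ i ∈ Finset.Icc 1 k, ℓ i ∈ LS.P i ∧ ∃ b, ℓ i = s(1, b))
    (hℓ2 : ∀ v ∈ Finset.Icc 2 (nn k - 1),
        ℓ (k + v - 1) ∈ LS.links ∧ ∃ b, v < b ∧ ℓ (k + v - 1) = s(v, b))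
    (A : Matrix (Fin (mm k)) (Fin (mm k)) ℚ)
    (hA : ∀ r c : Fin (mm k), A r c =
        if ℓ ((c : ℕ) + 1) ∈
            (if (r : ℕ) < k - 1 then deltaL LS.links (Qset k ((r : ℕ) + 1))
             else deltaL LS.links (Nset ((r : ℕ) - (k - 1) + 1)))
        then 1 else 0) :
    A.det ≠ 0 ∧ A.rank = mm k := by
  have hker : ∀ y, Matrix.vecMul y A = 0 → y = 0 := fun y hy => by
    have hload : ∀ e ∈ LS.links, cutLoad k LS.links (Function.extend Fin.val y 0) e = 0 :=
      fun e he => by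
        obtain ⟨c, hc, rfl⟩ := LS.exists_index_of_mem_links (by omega) hℓ1 hℓ2 he
        rw [← vecMul_apply_eq_cutLoad hA y ⟨c, hc⟩, hy, Pi.zero_apply]
    funext r
    rw [← Fin.val_injective.extend_apply y 0 r]
    exact LS.eq_zero_of_cutLoad_eq_zero hke (by omega) hload r.isLt
  have hdet : A.det ≠ 0 := fun h0 => by
    obtain ⟨y, hy0, hy⟩ := Matrix.exists_vecMul_eq_zero_iff.mpr h0
    exact hy0 (hker y hy)
  refine ⟨hdet, ?_⟩
  simpa using A.rank_of_isUnit ((A.isUnit_iff_isUnit_det).mpr hdet.isUnit)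

end CoverSmallCuts
end
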